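/- arXiv:1502.03393 — 2 statements merged into one kernel-verified Lean document; each statement's English description precedes it below -/
import Mathlib

section
/- Convergence of gradient Luxemburg norms for smooth functions (Lemma 2.4): Let p and p_h (h ∈ ℕ) all belong to the class 𝒞 and suppose p_h(x) → p(x) as h → ∞ for every x ∈ Ω. Then for every function w : ℝ^N → ℝ of class C^1 whose support is compact and contained in Ω, one has lim_{h→∞} ‖∇w‖_{p_h(x)} = ‖∇w‖_{p(x)}, where ∇w denotes the gradient of w and the Luxemburg norms are taken over Ω with the Euclidean norm of ∇w(x). -/
open MeasureTheory Filter Topology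

/-! Write `g = |∇w|`, bounded by some `M` on the compact set `closure Ω`. For fixed `γ > 0` the
integrands `(g/γ)^{p_h}` are dominated by `max 1 ((M/γ)^N)` on the finite-measure set `Ω`, so
`ρ_{p_h}(g/γ) → ρ_p(g/γ)`. Since all exponents are `≥ 1`, `ρ(g/γ) ≤ (γ'/γ) ρ(g/γ')` for
`γ' ≤ γ`; hence `ρ_p(g/γ) < 1` for every `γ > ‖g‖_p` and `ρ_p(g/γ) > 1` for every
`0 < γ < ‖g‖_p`. Both strict inequalities persist for `ρ_{p_h}` when `h` is large, which traps
`‖g‖_{p_h}` in any neighbourhood of `‖g‖_p`. -/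

/-- The `p(x)`-modular `ρ_{p(x)}(u) = ∫_Ω |u(x)|^{p(x)} dx`, valued in `ℝ≥0∞`. -/
noncomputable def pModular {N : ℕ} (Ω : Set (EuclideanSpace ℝ (Fin N)))
    (p u : EuclideanSpace ℝ (Fin N) → ℝ) : ENNReal :=
  ∫⁻ x in Ω, ENNReal.ofReal (|u x| ^ p x)

/-- The Luxemburg norm `‖u‖_{p(x)} = inf {γ > 0 : ρ_{p(x)}(u/γ) ≤ 1}`. -/
noncomputable def luxNorm {N : ℕ} (Ω : Set (EuclideanSpace ℝ (Fin N)))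
    (p u : EuclideanSpace ℝ (Fin N) → ℝ) : ℝ :=
  sInf {γ : ℝ | 0 < γ ∧ pModular Ω p (fun x => u x / γ) ≤ 1}

/-- The class `𝒞` of admissible exponents: `p` extends continuously to the
closure of `Ω`, satisfies `1 < inf_Ω p ≤ p(x) ≤ sup_Ω p < N`, and is
log-Hölder continuous. -/
def InClassC {N : ℕ} (Ω : Set (EuclideanSpace ℝ (Fin N)))
    (p : EuclideanSpace ℝ (Fin N) → ℝ) : Prop :=
  ContinuousOn p (closure Ω) ∧
  (∃ pm pM : ℝ, 1 < pm ∧ pM < (N : ℝ) ∧ ∀ x ∈ Ω, pm ≤ p x ∧ p x ≤ pM) ∧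
  (∃ L : ℝ, 0 < L ∧ ∀ x ∈ Ω, ∀ y ∈ Ω, 0 < dist x y → dist x y ≤ 1 / 2 →
    |p x - p y| ≤ -L / Real.log (dist x y))

open scoped ENNReal

theorem Real.rpow_le_max_one_rpow {t T q B : ℝ} (ht : 0 ≤ t) (htT : t ≤ T) (hq : 0 ≤ q)
    (hqB : q ≤ B) : t ^ q ≤ max 1 (T ^ B) := by
  rcases le_or_gt t 1 with ht1 | ht1
  · exact le_max_of_le_left (Real.rpow_le_one ht ht1 hq)
  · calc t ^ q ≤ t ^ B := Real.rpow_le_rpow_of_exponent_le ht1.le hqB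
      _ ≤ T ^ B := Real.rpow_le_rpow ht htT (hq.trans hqB)
      _ ≤ max 1 (T ^ B) := le_max_right _ _

namespace InClassC

variable {N : ℕ} {Ω : Set (EuclideanSpace ℝ (Fin N))} {p : EuclideanSpace ℝ (Fin N) → ℝ}

theorem continuousOn (hp : InClassC Ω p) : ContinuousOn p Ω :=
  hp.1.mono subset_closure

theorem one_le (hp : InClassC Ω p) {x} (hx : x ∈ Ω) : 1 ≤ p x := by
  obtain ⟨-, ⟨_, _, hpm, -, hb⟩, -⟩ := hp
  exact hpm.le.trans (hb x hx).1

theorem le_dim (hp : InClassC Ω p) {x} (hx : x ∈ Ω) : p x ≤ N := by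
  obtain ⟨-, ⟨_, _, -, hpM, hb⟩, -⟩ := hp
  exact (hb x hx).2.trans hpM.le

end InClassC

theorem ContDiff.continuous_gradient {N : ℕ} {w : EuclideanSpace ℝ (Fin N) → ℝ}
    (hw : ContDiff ℝ 1 w) : Continuous (gradient w) :=
  (InnerProductSpace.toDual ℝ _).symm.continuous.comp (hw.continuous_fderiv one_ne_zero)

section Modular

variable {N : ℕ} {Ω : Set (EuclideanSpace ℝ (Fin N))} {q g : EuclideanSpace ℝ (Fin N) → ℝ}

theorem pModular_div_le_mul (hΩ : MeasurableSet Ω) (hq : ∀ x ∈ Ω, 1 ≤ q x) (hg : 0 ≤ g)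
    {γ' γ : ℝ} (hγ' : 0 < γ') (hγ'γ : γ' ≤ γ) :
    pModular Ω q (fun x => g x / γ) ≤
      ENNReal.ofReal (γ' / γ) * pModular Ω q (fun x => g x / γ') := by
  have hγ : 0 < γ := hγ'.trans_le hγ'γ
  rw [pModular, pModular, ← lintegral_const_mul' _ _ ENNReal.ofReal_ne_top]
  refine setLIntegral_mono' hΩ fun x hx => ?_
  rw [← ENNReal.ofReal_mul (by positivity)]
  refine ENNReal.ofReal_le_ofReal ?_
  have hsplit : |g x / γ| = γ' / γ * |g x / γ'| := by
    rw [abs_of_nonneg (div_nonneg (hg x) hγ.le), abs_of_nonneg (div_nonneg (hg x) hγ'.le)]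
    field_simp
  rw [hsplit, Real.mul_rpow (by positivity) (abs_nonneg _)]
  gcongr
  exact Real.rpow_le_self_of_le_one (by positivity) (div_le_one_of_le₀ hγ'γ hγ.le) (hq x hx)

theorem pModular_div_antitone (hΩ : MeasurableSet Ω) (hq : ∀ x ∈ Ω, 1 ≤ q x) (hg : 0 ≤ g)
    {γ' γ : ℝ} (hγ' : 0 < γ') (hγ'γ : γ' ≤ γ) :
    pModular Ω q (fun x => g x / γ) ≤ pModular Ω q (fun x => g x / γ') := by
  refine (pModular_div_le_mul hΩ hq hg hγ' hγ'γ).trans ?_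
  have : ENNReal.ofReal (γ' / γ) ≤ 1 :=
    ENNReal.ofReal_le_one.2 (div_le_one_of_le₀ hγ'γ (hγ'.le.trans hγ'γ))
  exact mul_le_of_le_one_left' this

theorem pModular_div_le_volume (hΩ : MeasurableSet Ω) (hq : ∀ x ∈ Ω, 0 ≤ q x) (hg : 0 ≤ g)
    {γ : ℝ} (hγ : 0 < γ) (hgγ : ∀ x ∈ Ω, g x ≤ γ) :
    pModular Ω q (fun x => g x / γ) ≤ volume Ω := by
  calc pModular Ω q (fun x => g x / γ) ≤ ∫⁻ _ in Ω, 1 := by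
        refine setLIntegral_mono' hΩ fun x hx => ENNReal.ofReal_le_one.2 ?_
        refine Real.rpow_le_one (abs_nonneg _) ?_ (hq x hx)
        rw [abs_of_nonneg (div_nonneg (hg x) hγ.le)]
        exact div_le_one_of_le₀ (hgγ x hx) hγ.le
    _ = volume Ω := by simp

theorem exists_pModular_div_le_one (hΩ : MeasurableSet Ω) (hΩfin : volume Ω ≠ ∞)
    (hq : ∀ x ∈ Ω, 1 ≤ q x) (hg : 0 ≤ g) {M : ℝ} (hgM : ∀ x ∈ Ω, g x ≤ M) :
    ∃ γ, 0 < γ ∧ pModular Ω q (fun x => g x / γ) ≤ 1 := by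
  set V := (volume Ω).toReal
  set c := max M 1
  have hc : 0 < c := by positivity
  refine ⟨(V + 1) * c, by positivity, ?_⟩
  have hbound : pModular Ω q (fun x => g x / c) ≤ ENNReal.ofReal V := by
    rw [ENNReal.ofReal_toReal hΩfin]
    exact pModular_div_le_volume hΩ (fun x hx => zero_le_one.trans (hq x hx)) hg hc
      fun x hx => (hgM x hx).trans (le_max_left _ _)
  calc pModular Ω q (fun x => g x / ((V + 1) * c))
      ≤ ENNReal.ofReal (c / ((V + 1) * c)) * pModular Ω q (fun x => g x / c) :=
        pModular_div_le_mul hΩ hq hg hc (le_mul_of_one_le_left hc.le (by simp [V]))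
    _ ≤ ENNReal.ofReal (V + 1)⁻¹ * ENNReal.ofReal V := by
        rw [div_mul_cancel_right₀ hc.ne']
        gcongr
    _ ≤ 1 := by
        rw [← ENNReal.ofReal_mul (by positivity), ENNReal.ofReal_le_one,
          inv_mul_le_one₀ (by positivity)]
        linarith

theorem tendsto_pModular_div (hΩ : MeasurableSet Ω) (hΩfin : volume Ω ≠ ∞) (hgc : Continuous g)
    (hg : 0 ≤ g) {M : ℝ} (hgM : ∀ x ∈ Ω, g x ≤ M) {qh : ℕ → EuclideanSpace ℝ (Fin N) → ℝ}
    (hqhc : ∀ h, ContinuousOn (qh h) Ω) {B : ℝ} (hqh0 : ∀ h, ∀ x ∈ Ω, 0 ≤ qh h x)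
    (hqhB : ∀ h, ∀ x ∈ Ω, qh h x ≤ B) (hq : ∀ x ∈ Ω, 0 < q x)
    (hconv : ∀ x ∈ Ω, Tendsto (fun h => qh h x) atTop (𝓝 (q x))) {γ : ℝ} (hγ : 0 < γ) :
    Tendsto (fun h => pModular Ω (qh h) (fun x => g x / γ)) atTop
      (𝓝 (pModular Ω q (fun x => g x / γ))) := by
  refine tendsto_lintegral_of_dominated_convergence'
    (fun _ => ENNReal.ofReal (max 1 ((M / γ) ^ B))) (fun h => ?_) (fun h => ?_) ?_ ?_
  · exact (((hgc.div_const γ).abs.aemeasurable).pow ((hqhc h).aemeasurable hΩ)).ennreal_ofReal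
  · refine (ae_restrict_iff' hΩ).2 (ae_of_all _ fun x hx => ENNReal.ofReal_le_ofReal ?_)
    refine Real.rpow_le_max_one_rpow (abs_nonneg _) ?_ (hqh0 h x hx) (hqhB h x hx)
    rw [abs_of_nonneg (div_nonneg (hg x) hγ.le)]
    gcongr
    exact hgM x hx
  · simp only [lintegral_const, Measure.restrict_apply_univ]
    exact ENNReal.mul_ne_top ENNReal.ofReal_ne_top hΩfin
  · refine (ae_restrict_iff' hΩ).2 (ae_of_all _ fun x hx => ?_)
    exact ENNReal.tendsto_ofReal (tendsto_const_nhds.rpow (hconv x hx) (Or.inr (hq x hx)))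

end Modular

section Luxemburg

variable {N : ℕ} {Ω : Set (EuclideanSpace ℝ (Fin N))} {q g : EuclideanSpace ℝ (Fin N) → ℝ}

theorem luxNorm_nonneg : 0 ≤ luxNorm Ω q g :=
  Real.sInf_nonneg fun _ hγ => hγ.1.le

theorem luxNorm_le_of_pModular_le_one {γ : ℝ} (hγ : 0 < γ)
    (h : pModular Ω q (fun x => g x / γ) ≤ 1) : luxNorm Ω q g ≤ γ :=
  csInf_le ⟨0, fun _ hγ' => hγ'.1.le⟩ ⟨hγ, h⟩

theorem le_luxNorm_of_one_lt_pModular (hΩ : MeasurableSet Ω) (hq : ∀ x ∈ Ω, 1 ≤ q x)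
    (hg : 0 ≤ g) (hne : ∃ γ, 0 < γ ∧ pModular Ω q (fun x => g x / γ) ≤ 1) {γ : ℝ}
    (h : 1 < pModular Ω q (fun x => g x / γ)) : γ ≤ luxNorm Ω q g := by
  refine le_csInf hne fun γ' ⟨hγ', hle⟩ => le_of_not_gt fun hγ'γ => ?_
  exact h.not_ge ((pModular_div_antitone hΩ hq hg hγ' hγ'γ.le).trans hle)

theorem pModular_lt_one_of_luxNorm_lt (hΩ : MeasurableSet Ω) (hq : ∀ x ∈ Ω, 1 ≤ q x)
    (hg : 0 ≤ g) (hne : ∃ γ, 0 < γ ∧ pModular Ω q (fun x => g x / γ) ≤ 1) {γ : ℝ}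
    (h : luxNorm Ω q g < γ) : pModular Ω q (fun x => g x / γ) < 1 := by
  obtain ⟨γ', ⟨hγ', hle⟩, hγ'γ⟩ := exists_lt_of_csInf_lt hne h
  calc pModular Ω q (fun x => g x / γ)
      ≤ ENNReal.ofReal (γ' / γ) * pModular Ω q (fun x => g x / γ') :=
        pModular_div_le_mul hΩ hq hg hγ' hγ'γ.le
    _ ≤ ENNReal.ofReal (γ' / γ) * 1 := by gcongr
    _ < 1 := by
        rw [mul_one, ENNReal.ofReal_lt_one]
        exact (div_lt_one (hγ'.trans hγ'γ)).2 hγ'γ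

theorem tendsto_luxNorm_of_tendsto_pModular (hΩ : MeasurableSet Ω)
    {qh : ℕ → EuclideanSpace ℝ (Fin N) → ℝ} (hqh : ∀ h, ∀ x ∈ Ω, 1 ≤ qh h x)
    (hq : ∀ x ∈ Ω, 1 ≤ q x) (hg : 0 ≤ g)
    (hneh : ∀ h, ∃ γ, 0 < γ ∧ pModular Ω (qh h) (fun x => g x / γ) ≤ 1)
    (hne : ∃ γ, 0 < γ ∧ pModular Ω q (fun x => g x / γ) ≤ 1)
    (hmod : ∀ γ, 0 < γ → Tendsto (fun h => pModular Ω (qh h) (fun x => g x / γ)) atTop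
      (𝓝 (pModular Ω q (fun x => g x / γ)))) :
    Tendsto (fun h => luxNorm Ω (qh h) g) atTop (𝓝 (luxNorm Ω q g)) := by
  refine tendsto_order.2 ⟨fun a ha => ?_, fun a ha => ?_⟩
  · rcases lt_or_ge a 0 with ha0 | ha0
    · exact Eventually.of_forall fun h => ha0.trans_le luxNorm_nonneg
    obtain ⟨c, hac, hc⟩ := exists_between ha
    have hρc : 1 < pModular Ω q (fun x => g x / c) :=
      lt_of_not_ge fun hle => (luxNorm_le_of_pModular_le_one (ha0.trans_lt hac) hle).not_gt hc
    filter_upwards [(hmod c (ha0.trans_lt hac)).eventually_const_lt hρc] with h hh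
    exact hac.trans_le (le_luxNorm_of_one_lt_pModular hΩ (hqh h) hg (hneh h) hh)
  · obtain ⟨c, hc, hca⟩ := exists_between ha
    have hc0 : 0 < c := luxNorm_nonneg.trans_lt hc
    filter_upwards [(hmod c hc0).eventually_lt_const
      (pModular_lt_one_of_luxNorm_lt hΩ hq hg hne hc)] with h hh
    exact (luxNorm_le_of_pModular_le_one hc0 hh.le).trans_lt hca

end Luxemburg

theorem gradient_luxNorm_convergence_general {N : ℕ}
    (Ω : Set (EuclideanSpace ℝ (Fin N))) (hΩopen : IsOpen Ω)
    (hΩbdd : Bornology.IsBounded Ω)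
    (p : EuclideanSpace ℝ (Fin N) → ℝ)
    (ph : ℕ → EuclideanSpace ℝ (Fin N) → ℝ)
    (hp : InClassC Ω p) (hph : ∀ h, InClassC Ω (ph h))
    (hconv : ∀ x ∈ Ω, Tendsto (fun h => ph h x) atTop (𝓝 (p x)))
    (w : EuclideanSpace ℝ (Fin N) → ℝ) (hw : ContDiff ℝ 1 w) :
    Tendsto (fun h => luxNorm Ω (ph h) (fun x => ‖gradient w x‖)) atTop
      (𝓝 (luxNorm Ω p (fun x => ‖gradient w x‖))) := by
  have hΩ : MeasurableSet Ω := hΩopen.measurableSet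
  have hΩfin : volume Ω ≠ ∞ := hΩbdd.measure_lt_top.ne
  set g := fun x => ‖gradient w x‖
  have hgc : Continuous g := hw.continuous_gradient.norm
  have hg : 0 ≤ g := fun x => norm_nonneg _
  obtain ⟨M, hM⟩ : ∃ M, ∀ x ∈ Ω, g x ≤ M := by
    obtain ⟨M, hM⟩ := hΩbdd.isCompact_closure.exists_bound_of_continuousOn hgc.continuousOn
    exact ⟨M, fun x hx => (le_abs_self _).trans (hM x (subset_closure hx))⟩
  have hp1 : ∀ x ∈ Ω, 1 ≤ p x := fun x hx => hp.one_le hx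
  have hph1 : ∀ h, ∀ x ∈ Ω, 1 ≤ ph h x := fun h x hx => (hph h).one_le hx
  refine tendsto_luxNorm_of_tendsto_pModular hΩ hph1 hp1 hg
    (fun h => exists_pModular_div_le_one hΩ hΩfin (hph1 h) hg hM)
    (exists_pModular_div_le_one hΩ hΩfin hp1 hg hM) fun _ hγ =>
    tendsto_pModular_div hΩ hΩfin hgc hg hM (fun h => (hph h).continuousOn)
    (fun h x hx => zero_le_one.trans (hph1 h x hx)) (fun h x hx => (hph h).le_dim hx)
    (fun x hx => one_pos.trans_le (hp1 x hx)) hconv hγ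

/-- Convergence of gradient Luxemburg norms for `C¹` functions with compact
support in `Ω`, under pointwise convergence of the exponents. -/
theorem gradient_luxNorm_convergence {N : ℕ} (hN : 2 ≤ N)
    (Ω : Set (EuclideanSpace ℝ (Fin N))) (hΩopen : IsOpen Ω)
    (hΩbdd : Bornology.IsBounded Ω)
    (p : EuclideanSpace ℝ (Fin N) → ℝ)
    (ph : ℕ → EuclideanSpace ℝ (Fin N) → ℝ)
    (hp : InClassC Ω p) (hph : ∀ h, InClassC Ω (ph h))
    (hconv : ∀ x ∈ Ω, Tendsto (fun h => ph h x) atTop (𝓝 (p x)))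
    (w : EuclideanSpace ℝ (Fin N) → ℝ) (hw : ContDiff ℝ 1 w)
    (hwsupp : HasCompactSupport w) (hwΩ : tsupport w ⊆ Ω) :
    Tendsto (fun h => luxNorm Ω (ph h) (fun x => ‖gradient w x‖)) atTop
      (𝓝 (luxNorm Ω p (fun x => ‖gradient w x‖))) :=
  gradient_luxNorm_convergence_general Ω hΩopen hΩbdd p ph hp hph hconv w hw
end

section
/- Modular convergence along a subsequence under strong L^{p_S}-convergence (the analytic content of Lemma 2.9): Let Ω have finite Lebesgue measure, let p, p_h : Ω → ℝ (h ∈ ℕ) be measurable with p_h(x) → p(x) for a.e. x ∈ Ω, and suppose there are constants 1 < p_I and p_S < ∞ such that p_I ≤ p_h(x) ≤ p_S for all h and a.e. x. If u_h → u strongly in the constant-exponent Lebesgue space L^{p_S}(Ω), then there exists a subsequence (u_{h_n}) such that lim_{n→∞} ρ_{p_{h_n}(x)}(u_{h_n}) = ρ_{p(x)}(u). -/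
open MeasureTheory Filter Topology

/-!
Strong convergence in `L^{p_S}` gives a subsequence with `∑ₖ ∫ |u_{h_k} - u|^{p_S} < ∞`. Along it
`u_{h_k} → u` a.e., and `|u_{h_k}|^{p_S} ≤ 2^{p_S - 1} (|u|^{p_S} + ∑ₖ |u_{h_k} - u|^{p_S})` is a
single integrable bound. Since `t^r ≤ 1 + t^{p_S}` for `0 ≤ r ≤ p_S` and `Ω` has finite measure,
dominated convergence applies to `|u_{h_k}|^{p_{h_k}}`.
-/

open scoped ENNReal

theorem ENNReal.exists_strictMono_tsum_ne_top {a : ℕ → ℝ≥0∞} (ha : Tendsto a atTop (𝓝 0)) :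
    ∃ φ : ℕ → ℕ, StrictMono φ ∧ ∑' k, a (φ k) ≠ ∞ := by
  obtain ⟨φ, hφ, hlt⟩ := extraction_forall_of_eventually fun k =>
    ha.eventually (gt_mem_nhds (ENNReal.pow_pos (by norm_num) k : (0 : ℝ≥0∞) < 2⁻¹ ^ k))
  refine ⟨φ, hφ, ne_top_of_le_ne_top ?_ (ENNReal.tsum_le_tsum fun k => (hlt k).le)⟩
  simp [ENNReal.tsum_geometric, ENNReal.one_sub_inv_two]

theorem ENNReal.rpow_le_one_add_rpow (x : ℝ≥0∞) {r s : ℝ} (hr : 0 ≤ r) (hrs : r ≤ s) :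
    x ^ r ≤ 1 + x ^ s := by
  rcases le_total x 1 with hx | hx
  · exact (ENNReal.rpow_le_one hx hr).trans le_self_add
  · exact (ENNReal.rpow_le_rpow_of_exponent_le hx hrs).trans le_add_self

theorem tendsto_ofReal_abs_rpow {ι : Type*} {l : Filter ι} {a : ι → ℝ} {r : ι → ℝ} {a₀ r₀ : ℝ}
    (ha : Tendsto a l (𝓝 a₀)) (hr : Tendsto r l (𝓝 r₀)) (hr₀ : 0 < r₀) :
    Tendsto (fun i => ENNReal.ofReal (|a i| ^ r i)) l (𝓝 (ENNReal.ofReal (|a₀| ^ r₀))) :=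
  ENNReal.tendsto_ofReal (ha.abs.rpow hr (Or.inr hr₀))

namespace MeasureTheory

variable {α : Type*} [MeasurableSpace α] {μ : Measure α}

theorem tendsto_lintegral_rpow_enorm_of_tendsto_eLpNorm {ι ε : Type*} [ENorm ε] {l : Filter ι}
    {f : ι → α → ε} {q : ℝ} (hq : 0 < q)
    (hf : Tendsto (fun i => eLpNorm (f i) (ENNReal.ofReal q) μ) l (𝓝 0)) :
    Tendsto (fun i => ∫⁻ x, ‖f i x‖ₑ ^ q ∂μ) l (𝓝 0) := by
  have h := ((ENNReal.continuous_rpow_const (y := q)).tendsto 0).comp hf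
  rw [ENNReal.zero_rpow_of_pos hq] at h
  refine h.congr fun i => ?_
  simp [eLpNorm_eq_eLpNorm' (ENNReal.ofReal_pos.2 hq).ne' ENNReal.ofReal_ne_top,
    ENNReal.toReal_ofReal hq.le, lintegral_rpow_enorm_eq_rpow_eLpNorm' hq]

theorem ae_tendsto_of_lintegral_tsum_rpow_enorm_sub_ne_top {E : Type*} [NormedAddCommGroup E]
    {f : ℕ → α → E} {g : α → E} {q : ℝ} (hq : 0 < q)
    (hfg : ∀ n, AEStronglyMeasurable (fun x => f n x - g x) μ)
    (h : ∫⁻ x, ∑' n, ‖f n x - g x‖ₑ ^ q ∂μ ≠ ∞) :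
    ∀ᵐ x ∂μ, Tendsto (fun n => f n x) atTop (𝓝 (g x)) := by
  filter_upwards [ae_lt_top' (AEMeasurable.tsum fun n => (hfg n).enorm.pow_const q) h]
    with x hx
  rw [tendsto_iff_enorm_sub_tendsto_zero]
  have := ((ENNReal.continuous_rpow_const (y := q⁻¹)).tendsto 0).comp
    (ENNReal.tendsto_atTop_zero_of_tsum_ne_top hx.ne)
  simpa [Function.comp_def, ← ENNReal.rpow_mul, mul_inv_cancel₀ hq.ne',
    ENNReal.zero_rpow_of_pos (inv_pos.2 hq)] using this

theorem exists_subseq_ae_tendsto_and_rpow_enorm_le_of_tendsto_eLpNorm {E : Type*}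
    [NormedAddCommGroup E] {f : ℕ → α → E} {g : α → E} {q : ℝ} (hq : 1 ≤ q)
    (hf : ∀ n, AEStronglyMeasurable (f n) μ) (hg : MemLp g (ENNReal.ofReal q) μ)
    (hfg : Tendsto (fun n => eLpNorm (fun x => f n x - g x) (ENNReal.ofReal q) μ) atTop (𝓝 0)) :
    ∃ φ : ℕ → ℕ, StrictMono φ ∧ (∀ᵐ x ∂μ, Tendsto (fun n => f (φ n) x) atTop (𝓝 (g x))) ∧
      ∃ G : α → ℝ≥0∞, ∫⁻ x, G x ∂μ ≠ ∞ ∧ ∀ n, ∀ᵐ x ∂μ, ‖f (φ n) x‖ₑ ^ q ≤ G x := by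
  have hq₀ : 0 < q := zero_lt_one.trans_le hq
  have hmeas n : AEStronglyMeasurable (fun x => f n x - g x) μ := (hf n).sub hg.1
  obtain ⟨φ, hφ, hsum⟩ := ENNReal.exists_strictMono_tsum_ne_top
    (tendsto_lintegral_rpow_enorm_of_tendsto_eLpNorm hq₀ hfg)
  set H : α → ℝ≥0∞ := fun x => ∑' k, ‖f (φ k) x - g x‖ₑ ^ q
  have hH_meas : AEMeasurable H μ :=
    AEMeasurable.tsum fun k => (hmeas (φ k)).enorm.pow_const q
  have hH : ∫⁻ x, H x ∂μ ≠ ∞ := by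
    rwa [lintegral_tsum fun k => (hmeas (φ k)).enorm.pow_const q]
  refine ⟨φ, hφ, ae_tendsto_of_lintegral_tsum_rpow_enorm_sub_ne_top hq₀ (fun k => hmeas (φ k)) hH,
    fun x => 2 ^ (q - 1) * (‖g x‖ₑ ^ q + H x), ?_, fun n => ae_of_all _ fun x => ?_⟩
  · rw [lintegral_const_mul' _ _ (by simp), lintegral_add_right' _ hH_meas]
    have hg_int := lintegral_rpow_enorm_lt_top_of_eLpNorm_lt_top
      (ENNReal.ofReal_pos.2 hq₀).ne' ENNReal.ofReal_ne_top hg.2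
    rw [ENNReal.toReal_ofReal hq₀.le] at hg_int
    exact ENNReal.mul_ne_top (by simp) (ENNReal.add_ne_top.2 ⟨hg_int.ne, hH⟩)
  · calc ‖f (φ n) x‖ₑ ^ q ≤ (‖g x‖ₑ + ‖f (φ n) x - g x‖ₑ) ^ q := by
          gcongr
          simpa using enorm_add_le (g x) (f (φ n) x - g x)
      _ ≤ 2 ^ (q - 1) * (‖g x‖ₑ ^ q + ‖f (φ n) x - g x‖ₑ ^ q) :=
          ENNReal.rpow_add_le_mul_rpow_add_rpow _ _ hq
      _ ≤ 2 ^ (q - 1) * (‖g x‖ₑ ^ q + H x) := by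
          gcongr
          exact ENNReal.le_tsum (f := fun k => ‖f (φ k) x - g x‖ₑ ^ q) n

end MeasureTheory

theorem modular_convergence_subsequence_general {N : ℕ}
    (Ω : Set (EuclideanSpace ℝ (Fin N)))
    (hΩfin : volume Ω < ⊤)
    (p : EuclideanSpace ℝ (Fin N) → ℝ)
    (ph : ℕ → EuclideanSpace ℝ (Fin N) → ℝ)
    (hphmeas : ∀ h, Measurable (ph h))
    (hpconv : ∀ᵐ x ∂(volume.restrict Ω), Tendsto (fun h => ph h x) atTop (𝓝 (p x)))
    (pI pS : ℝ) (hpI : 1 < pI)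
    (hbounds : ∀ h, ∀ᵐ x ∂(volume.restrict Ω), pI ≤ ph h x ∧ ph h x ≤ pS)
    (u : EuclideanSpace ℝ (Fin N) → ℝ)
    (uh : ℕ → EuclideanSpace ℝ (Fin N) → ℝ)
    (huhmeas : ∀ h, Measurable (uh h))
    (humem : MemLp u (ENNReal.ofReal pS) (volume.restrict Ω))
    (hstrong : Tendsto
      (fun h => eLpNorm (fun x => uh h x - u x) (ENNReal.ofReal pS) (volume.restrict Ω))
      atTop (𝓝 0)) :
    ∃ φ : ℕ → ℕ, StrictMono φ ∧
      Tendsto (fun n => pModular Ω (ph (φ n)) (uh (φ n))) atTop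
        (𝓝 (pModular Ω p u)) := by
  rcases eq_or_ne (volume.restrict Ω) 0 with hμ | hμ
  · exact ⟨id, strictMono_id, by simp [pModular, hμ]⟩
  have : (ae (volume.restrict Ω)).NeBot := ae_neBot.2 hμ
  -- the bounds hold at some point, so `1 < pI ≤ pS`
  obtain ⟨x₀, hpI_le, hle_pS⟩ := (hbounds 0).exists
  obtain ⟨φ, hφ, hu_lim, G, hG, hG_le⟩ :=
    exists_subseq_ae_tendsto_and_rpow_enorm_le_of_tendsto_eLpNorm (by linarith)
      (fun n => (huhmeas n).aestronglyMeasurable) humem hstrong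
  refine ⟨φ, hφ, tendsto_lintegral_of_dominated_convergence' (fun x => 1 + G x)
    (fun n => ((huhmeas (φ n)).abs.pow (hphmeas (φ n))).ennreal_ofReal.aemeasurable)
    (fun n => ?_) ?_ ?_⟩
  · filter_upwards [hbounds (φ n), hG_le n] with x hx hxG
    rw [← ENNReal.ofReal_rpow_of_nonneg (abs_nonneg _) (by linarith), ← Real.enorm_eq_ofReal_abs]
    exact (ENNReal.rpow_le_one_add_rpow _ (by linarith) hx.2).trans (by gcongr)
  · rw [lintegral_add_left measurable_const]
    exact ENNReal.add_ne_top.2 ⟨by simpa using hΩfin.ne, hG⟩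
  · filter_upwards [hu_lim, hpconv, ae_all_iff.2 hbounds] with x hux hpx hx
    have hpI_le_p : pI ≤ p x := ge_of_tendsto' hpx fun n => (hx n).1
    exact tendsto_ofReal_abs_rpow hux (hpx.comp hφ.tendsto_atTop) (by linarith)

/-- Modular convergence along a subsequence under strong `L^{p_S}`-convergence:
if `p_h → p` a.e. with `1 < p_I ≤ p_h ≤ p_S < ∞` and `u_h → u` strongly in the
constant-exponent space `L^{p_S}(Ω)`, then `ρ_{p_{h_n}(x)}(u_{h_n}) → ρ_{p(x)}(u)`
along a subsequence. -/
theorem modular_convergence_subsequence {N : ℕ} (hN : 2 ≤ N)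
    (Ω : Set (EuclideanSpace ℝ (Fin N))) (hΩmeas : MeasurableSet Ω)
    (hΩfin : volume Ω < ⊤)
    (p : EuclideanSpace ℝ (Fin N) → ℝ)
    (ph : ℕ → EuclideanSpace ℝ (Fin N) → ℝ)
    (hpmeas : Measurable p) (hphmeas : ∀ h, Measurable (ph h))
    (hpconv : ∀ᵐ x ∂(volume.restrict Ω), Tendsto (fun h => ph h x) atTop (𝓝 (p x)))
    (pI pS : ℝ) (hpI : 1 < pI)
    (hbounds : ∀ h, ∀ᵐ x ∂(volume.restrict Ω), pI ≤ ph h x ∧ ph h x ≤ pS)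
    (u : EuclideanSpace ℝ (Fin N) → ℝ)
    (uh : ℕ → EuclideanSpace ℝ (Fin N) → ℝ)
    (humeas : Measurable u) (huhmeas : ∀ h, Measurable (uh h))
    (humem : MemLp u (ENNReal.ofReal pS) (volume.restrict Ω))
    (huhmem : ∀ h, MemLp (uh h) (ENNReal.ofReal pS) (volume.restrict Ω))
    (hstrong : Tendsto
      (fun h => eLpNorm (fun x => uh h x - u x) (ENNReal.ofReal pS) (volume.restrict Ω))
      atTop (𝓝 0)) :
    ∃ φ : ℕ → ℕ, StrictMono φ ∧
      Tendsto (fun n => pModular Ω (ph (φ n)) (uh (φ n))) atTop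
        (𝓝 (pModular Ω p u)) :=
  modular_convergence_subsequence_general Ω hΩfin p ph hphmeas hpconv pI pS hpI hbounds u uh huhmeas
    humem hstrong
end
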